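/- Worst-case expected return over the Wasserstein ball: Let s₁, …, s_N ∈ ℝⁿ with empirical measure Q_N and sample mean s̄, let w ∈ ℝⁿ with w ≠ 0, and let δ > 0. Then inf{ E^Q[w·S] : Q a Borel probability measure on ℝⁿ with D_c(Q, Q_N) ≤ δ } = w·s̄ − √δ·‖w‖₂. Consequently, for any α₀ ∈ ℝ, the constraint min_{Q ∈ U_δ(Q_N)} E^Q[w·S] ≥ α₀ holds if and only if E^{Q_N}[w·S] ≥ α₀ + √δ·‖w‖₂. -/

import Mathlib

/-!
For any coupling `π` of `Q` with `Q_N`, `E^{Q_N}[w·S] - E^Q[w·S] = ∫ w·(y - x) dπ`, which by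
Cauchy–Schwarz in `ℝⁿ` and Jensen's inequality for `√` is at most `‖w‖ (∫ ‖y - x‖² dπ)^{1/2}`;
taking the infimum over couplings, every `Q` in the ball has expected return at least
`w·s̄ - √δ‖w‖`. The bound is attained by translating `Q_N` by `-√δ w / ‖w‖`: coupling each
translated point with its original costs exactly `δ`. So the infimum is a minimum, and the
second claim is a rearrangement of the first.
-/

open MeasureTheory
open scoped ENNReal BigOperators

/-- Euclidean dot product on `Fin n → ℝ`. -/
noncomputable def eDot {n : ℕ} (a b : Fin n → ℝ) : ℝ := ∑ i, a i * b i

/-- Transport cost of a coupling `π` for the quadratic cost `c(u,v) = ‖u − v‖₂²`. -/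
noncomputable def transportCost {n : ℕ}
    (π : Measure ((Fin n → ℝ) × (Fin n → ℝ))) : ℝ≥0∞ :=
  ∫⁻ p, ENNReal.ofReal (∑ i, (p.1 i - p.2 i) ^ 2) ∂π

/-- Optimal transport cost `D_c(Q, Q')` with quadratic cost `c(u,v) = ‖u − v‖₂²`. -/
noncomputable def otCost {n : ℕ} (Q Q' : Measure (Fin n → ℝ)) : ℝ≥0∞ :=
  sInf { r | ∃ π : Measure ((Fin n → ℝ) × (Fin n → ℝ)),
      IsProbabilityMeasure π ∧ π.map Prod.fst = Q ∧ π.map Prod.snd = Q' ∧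
      r = transportCost π }

/-- Empirical measure `Q_N = (1/N)·Σᵢ δ_{sᵢ}` of the sample points `s₁, …, s_N`. -/
noncomputable def empiricalMeasure {n N : ℕ} (s : Fin N → (Fin n → ℝ)) :
    Measure (Fin n → ℝ) :=
  (N : ℝ≥0∞)⁻¹ • ∑ i, Measure.dirac (s i)

section EuclideanDot

variable {n : ℕ}

lemma measurable_eDot (w : Fin n → ℝ) : Measurable (eDot w) :=
  Finset.measurable_sum _ fun i _ => (measurable_pi_apply i).const_mul _

lemma eDot_add (a b c : Fin n → ℝ) : eDot a (b + c) = eDot a b + eDot a c := by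
  simp only [eDot, Pi.add_apply, mul_add, Finset.sum_add_distrib]

lemma eDot_sub (a b c : Fin n → ℝ) : eDot a (b - c) = eDot a b - eDot a c := by
  simp only [eDot, Pi.sub_apply, mul_sub, Finset.sum_sub_distrib]

lemma eDot_smul_self (c : ℝ) (a : Fin n → ℝ) : eDot a (c • a) = c * ∑ i, a i ^ 2 := by
  simp only [eDot, Pi.smul_apply, smul_eq_mul, Finset.mul_sum]
  exact Finset.sum_congr rfl fun i _ => by ring

lemma abs_eDot_le (a b : Fin n → ℝ) :
    |eDot a b| ≤ √(∑ i, a i ^ 2) * √(∑ i, b i ^ 2) := by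
  refine abs_le.2 ⟨?_, Real.sum_mul_le_sqrt_mul_sqrt _ _ _⟩
  have := Real.sum_mul_le_sqrt_mul_sqrt Finset.univ a (-b)
  simp only [Pi.neg_apply, neg_sq, mul_neg, Finset.sum_neg_distrib] at this
  exact neg_le.1 this

end EuclideanDot

lemma sum_sq_pos {ι : Type*} [Fintype ι] {w : ι → ℝ} (hw : w ≠ 0) : 0 < ∑ i, w i ^ 2 := by
  obtain ⟨i, hi⟩ := Function.ne_iff.1 hw
  exact Finset.sum_pos' (fun j _ => sq_nonneg _) ⟨i, Finset.mem_univ _, sq_pos_iff.2 hi⟩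

lemma MeasureTheory.Integrable.sqrt {α : Type*} [MeasurableSpace α] {μ : Measure α}
    [IsFiniteMeasure μ] {f : α → ℝ} (hf : Integrable f μ) : Integrable (fun x => √(f x)) μ := by
  refine (hf.norm.add (integrable_const 1)).mono'
    (Real.continuous_sqrt.comp_aestronglyMeasurable hf.1) (ae_of_all _ fun x => ?_)
  rw [Real.norm_eq_abs, abs_of_nonneg (Real.sqrt_nonneg _), Pi.add_apply,
    Real.sqrt_le_left (by positivity)]
  nlinarith [Real.le_norm_self (f x), norm_nonneg (f x)]

lemma integral_sqrt_le_sqrt_integral {α : Type*} [MeasurableSpace α] {μ : Measure α}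
    [IsProbabilityMeasure μ] {f : α → ℝ} (hf0 : 0 ≤ᵐ[μ] f) (hf : Integrable f μ) :
    ∫ x, √(f x) ∂μ ≤ √(∫ x, f x ∂μ) :=
  Real.strictConcaveOn_sqrt.concaveOn.le_map_integral Real.continuous_sqrt.continuousOn
    isClosed_Ici hf0 hf hf.sqrt

section Transport

variable {n : ℕ}

lemma abs_integral_eDot_sub_le {π : Measure ((Fin n → ℝ) × (Fin n → ℝ))}
    [IsProbabilityMeasure π] (hπ : transportCost π ≠ ⊤) (w : Fin n → ℝ) :
    |∫ p, eDot w (p.1 - p.2) ∂π| ≤ √(∑ i, w i ^ 2) * √(transportCost π).toReal := by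
  set g : (Fin n → ℝ) × (Fin n → ℝ) → ℝ := fun p => ∑ i, (p.1 i - p.2 i) ^ 2
  have hg_meas : Measurable g := by fun_prop
  have hg_nonneg : 0 ≤ᵐ[π] g := ae_of_all _ fun p => by positivity
  have hg_int : Integrable g π :=
    (lintegral_ofReal_ne_top_iff_integrable hg_meas.aestronglyMeasurable hg_nonneg).1 hπ
  have hcost : (transportCost π).toReal = ∫ p, g p ∂π :=
    (integral_eq_lintegral_of_nonneg_ae hg_nonneg hg_meas.aestronglyMeasurable).symm
  have hbound : ∀ p, |eDot w (p.1 - p.2)| ≤ √(∑ i, w i ^ 2) * √(g p) :=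
    fun p => abs_eDot_le w (p.1 - p.2)
  have hbound_int : Integrable (fun p => √(∑ i, w i ^ 2) * √(g p)) π :=
    hg_int.sqrt.const_mul _
  have hint : Integrable (fun p => eDot w (p.1 - p.2)) π :=
    hbound_int.mono' ((measurable_eDot w).comp (by fun_prop)).aestronglyMeasurable
      (ae_of_all _ hbound)
  calc |∫ p, eDot w (p.1 - p.2) ∂π|
      ≤ ∫ p, √(∑ i, w i ^ 2) * √(g p) ∂π :=
        (abs_integral_le_integral_abs).trans (integral_mono hint.abs hbound_int hbound)
    _ = √(∑ i, w i ^ 2) * ∫ p, √(g p) ∂π := integral_const_mul _ _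
    _ ≤ √(∑ i, w i ^ 2) * √(transportCost π).toReal := by
        rw [hcost]
        gcongr
        exact integral_sqrt_le_sqrt_integral hg_nonneg hg_int

end Transport

lemma integral_eDot_sub_le_sqrt_otCost {n : ℕ} {Q Q' : Measure (Fin n → ℝ)} (w : Fin n → ℝ)
    (hQ : Integrable (eDot w) Q) (hQ' : Integrable (eDot w) Q') (hfin : otCost Q Q' ≠ ⊤) :
    ∫ x, eDot w x ∂Q' - ∫ x, eDot w x ∂Q ≤ √(∑ i, w i ^ 2) * √(otCost Q Q').toReal := by
  rcases eq_or_ne w 0 with rfl | hw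
  · simp [eDot]
  have hw_pos : 0 < √(∑ i, w i ^ 2) := Real.sqrt_pos.2 (sum_sq_pos hw)
  set gap := ∫ x, eDot w x ∂Q' - ∫ x, eDot w x ∂Q with hgap_def
  rcases le_or_gt gap 0 with hgap | hgap
  · exact hgap.trans (by positivity)
  have hcoupling : ∀ π : Measure ((Fin n → ℝ) × (Fin n → ℝ)), IsProbabilityMeasure π →
      π.map Prod.fst = Q → π.map Prod.snd = Q' → transportCost π ≠ ⊤ →
      gap ≤ √(∑ i, w i ^ 2) * √(transportCost π).toReal := by
    intro π hπ h₁ h₂ hπ_fin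
    have hgap_eq : gap = -∫ p, eDot w (p.1 - p.2) ∂π := by
      simp only [eDot_sub]
      rw [integral_sub ((h₁ ▸ hQ).comp_measurable measurable_fst)
          ((h₂ ▸ hQ').comp_measurable measurable_snd), hgap_def, ← h₁, ← h₂,
        integral_map measurable_fst.aemeasurable (measurable_eDot w).aestronglyMeasurable,
        integral_map measurable_snd.aemeasurable (measurable_eDot w).aestronglyMeasurable,
        neg_sub]
    exact hgap_eq ▸ (neg_le_abs _).trans (abs_integral_eDot_sub_le hπ_fin w)
  have hratio_sq : ENNReal.ofReal ((gap / √(∑ i, w i ^ 2)) ^ 2) ≤ otCost Q Q' := by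
    refine le_sInf ?_
    rintro _ ⟨π, hπ, h₁, h₂, rfl⟩
    by_cases hπ_fin : transportCost π = ⊤
    · simp [hπ_fin]
    rw [← ENNReal.ofReal_toReal hπ_fin]
    refine ENNReal.ofReal_le_ofReal ((Real.le_sqrt (by positivity) ENNReal.toReal_nonneg).1 ?_)
    rw [div_le_iff₀' hw_pos]
    exact hcoupling π hπ h₁ h₂ hπ_fin
  have := (Real.le_sqrt (by positivity) ENNReal.toReal_nonneg).2
    ((ENNReal.ofReal_le_iff_le_toReal hfin).1 hratio_sq)
  rwa [div_le_iff₀' hw_pos] at this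

section Shift

variable {n : ℕ} (P : Measure (Fin n → ℝ)) (t : Fin n → ℝ)

lemma otCost_map_add_const_le [IsProbabilityMeasure P] :
    otCost (P.map (· + t)) P ≤ ENNReal.ofReal (∑ i, t i ^ 2) := by
  have hshift : Measurable fun x : Fin n → ℝ => x + t := measurable_add_const t
  have hpair : Measurable fun x : Fin n → ℝ => (x + t, x) := hshift.prodMk measurable_id
  refine sInf_le ⟨P.map fun x => (x + t, x), Measure.isProbabilityMeasure_map hpair.aemeasurable,
    ?_, ?_, ?_⟩
  · rw [Measure.map_map measurable_fst hpair]
    rfl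
  · rw [Measure.map_map measurable_snd hpair]
    exact Measure.map_id
  · rw [transportCost, lintegral_map (by fun_prop) hpair]
    simp

lemma integrable_eDot_map_add_const [IsFiniteMeasure P] {w : Fin n → ℝ}
    (hP : Integrable (eDot w) P) : Integrable (eDot w) (P.map (· + t)) := by
  refine (integrable_map_measure (measurable_eDot w).aestronglyMeasurable
    (measurable_add_const t).aemeasurable).2 ?_
  simp only [Function.comp_def, eDot_add]
  exact hP.add (integrable_const _)

lemma integral_eDot_map_add_const [IsProbabilityMeasure P] {w : Fin n → ℝ}
    (hP : Integrable (eDot w) P) :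
    ∫ x, eDot w x ∂(P.map (· + t)) = ∫ x, eDot w x ∂P + eDot w t := by
  rw [integral_map (measurable_add_const t).aemeasurable (measurable_eDot w).aestronglyMeasurable]
  simp only [eDot_add]
  rw [integral_add hP (integrable_const _), integral_const]
  simp

end Shift

lemma exists_otCost_le_and_integral_eDot_eq {n : ℕ} (P : Measure (Fin n → ℝ))
    [IsProbabilityMeasure P] {w : Fin n → ℝ} (hw : w ≠ 0) (hP : Integrable (eDot w) P)
    {δ : ℝ} (hδ : 0 ≤ δ) :
    ∃ Q : Measure (Fin n → ℝ), IsProbabilityMeasure Q ∧ otCost Q P ≤ ENNReal.ofReal δ ∧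
      Integrable (eDot w) Q ∧ ∫ x, eDot w x ∂Q = ∫ x, eDot w x ∂P - √δ * √(∑ i, w i ^ 2) := by
  set r := √(∑ i, w i ^ 2)
  have hr : ∑ i, w i ^ 2 = r ^ 2 := (Real.sq_sqrt (sum_sq_pos hw).le).symm
  have hr_pos : 0 < r := Real.sqrt_pos.2 (sum_sq_pos hw)
  set t := -(√δ / r) • w
  have ht_sq : ∑ i, t i ^ 2 = δ := by
    simp only [t, Pi.smul_apply, smul_eq_mul, mul_pow, neg_sq, ← Finset.mul_sum, hr,
      div_pow, Real.sq_sqrt hδ]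
    field_simp
  have ht_dot : eDot w t = -(√δ * r) := by
    rw [eDot_smul_self, hr]
    field_simp
  refine ⟨P.map (· + t), Measure.isProbabilityMeasure_map (measurable_add_const t).aemeasurable,
    ht_sq ▸ otCost_map_add_const_le P t, integrable_eDot_map_add_const P t hP, ?_⟩
  rw [integral_eDot_map_add_const P t hP, ht_dot, sub_eq_add_neg]

section Empirical

variable {n N : ℕ} (s : Fin N → (Fin n → ℝ))

lemma isProbabilityMeasure_empiricalMeasure (hN : 0 < N) :
    IsProbabilityMeasure (empiricalMeasure s) := by
  constructor
  simp [empiricalMeasure, ENNReal.inv_mul_cancel (Nat.cast_ne_zero.2 hN.ne')]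

lemma integrable_empiricalMeasure (hN : 0 < N) (f : (Fin n → ℝ) → ℝ) :
    Integrable f (empiricalMeasure s) :=
  (integrable_finsetSum_measure.2 fun _ _ => integrable_dirac enorm_lt_top).smul_measure
    (ENNReal.inv_ne_top.2 (Nat.cast_ne_zero.2 hN.ne'))

lemma integral_empiricalMeasure (f : (Fin n → ℝ) → ℝ) :
    ∫ x, f x ∂(empiricalMeasure s) = (N : ℝ)⁻¹ * ∑ i, f (s i) := by
  rw [empiricalMeasure, integral_smul_measure,
    integral_finsetSum_measure fun _ _ => integrable_dirac enorm_lt_top]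
  simp

lemma integral_eDot_empiricalMeasure (w : Fin n → ℝ) :
    ∫ x, eDot w x ∂(empiricalMeasure s) = eDot w fun j => (N : ℝ)⁻¹ * ∑ i, s i j := by
  rw [integral_empiricalMeasure]
  simp only [eDot, Finset.mul_sum]
  rw [Finset.sum_comm]
  exact Finset.sum_congr rfl fun i _ => Finset.sum_congr rfl fun j _ => by ring

end Empirical

/-- **Worst-case expected return over the Wasserstein ball.**
For sample points `s₁, …, s_N` with empirical measure `Q_N` and sample mean
`s̄`, `w ≠ 0` and `δ > 0`,
`inf{ E^Q[w·S] : D_c(Q, Q_N) ≤ δ } = w·s̄ − √δ·‖w‖₂`; consequently, for any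
`α₀`, the constraint `min_{Q ∈ U_δ(Q_N)} E^Q[w·S] ≥ α₀` holds if and only if
`E^{Q_N}[w·S] = w·s̄ ≥ α₀ + √δ·‖w‖₂`. -/
theorem stmt_15 {n N : ℕ} (hN : 0 < N) (s : Fin N → (Fin n → ℝ))
    (w : Fin n → ℝ) (hw : w ≠ 0) (δ : ℝ) (hδ : 0 < δ) :
    let sbar : Fin n → ℝ := fun j => (N : ℝ)⁻¹ * ∑ i, s i j
    let enorm : ℝ := Real.sqrt (∑ i, w i ^ 2)
    let worst : ℝ := sInf { v | ∃ Q : Measure (Fin n → ℝ),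
      IsProbabilityMeasure Q ∧ otCost Q (empiricalMeasure s) ≤ ENNReal.ofReal δ ∧
      Integrable (fun x => eDot w x) Q ∧ v = ∫ x, eDot w x ∂Q }
    worst = eDot w sbar - Real.sqrt δ * enorm ∧
      ∀ α₀ : ℝ, (α₀ ≤ worst ↔ α₀ + Real.sqrt δ * enorm ≤ eDot w sbar) := by
  intro sbar enorm worst
  have := isProbabilityMeasure_empiricalMeasure s hN
  have hmean : ∫ x, eDot w x ∂(empiricalMeasure s) = eDot w sbar :=
    integral_eDot_empiricalMeasure s w
  have hint := integrable_empiricalMeasure s hN (eDot w)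
  have hworst : worst = eDot w sbar - √δ * enorm := by
    refine IsLeast.csInf_eq ⟨?_, ?_⟩
    · obtain ⟨Q, hQ, hQ_cost, hQ_int, hQ_mean⟩ :=
        exists_otCost_le_and_integral_eDot_eq _ hw hint hδ.le
      exact ⟨Q, hQ, hQ_cost, hQ_int, by rw [hQ_mean, hmean]⟩
    · rintro v ⟨Q, -, hQ, hQ_int, rfl⟩
      have hgap := integral_eDot_sub_le_sqrt_otCost w hQ_int hint
        (ne_top_of_le_ne_top ENNReal.ofReal_ne_top hQ)
      have hcost : √(otCost Q (empiricalMeasure s)).toReal ≤ √δ :=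
        Real.sqrt_le_sqrt (ENNReal.toReal_le_of_le_ofReal hδ.le hQ)
      rw [hmean] at hgap
      nlinarith [mul_le_mul_of_nonneg_left hcost (Real.sqrt_nonneg (∑ i, w i ^ 2))]
  exact ⟨hworst, fun α₀ => hworst ▸ le_sub_iff_add_le⟩
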